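/- Let R, R_d, R_l ∈ SO(3), p, p_d, p_l ∈ ℝ³, and K_p, K_R real 3×3 matrices. Write g = (R,p), g_d = (R_d,p_d), g_l = (R_l,p_l), and let f_G(g,g_d) ∈ ℝ⁶ be the elastic wrench whose translational part is RᵀR_d K_p R_dᵀ(p − p_d) and whose rotational part is the vee of K_R R_dᵀR − RᵀR_d K_R. Define the spatial-frame wrench f_G^s(g,g_d) = Ad_{g⁻¹}ᵀ f_G(g,g_d). Then the spatial wrench is SE(3)-equivariant: f_G^s(g_l g, g_l g_d) = Ad_{g_l⁻¹}ᵀ f_G^s(g, g_d). -/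

import Mathlib

/-! Left translation by `g_l` leaves `Rᵀ R_d` unchanged and rotates `p - p_d` by `R_l`, which
the factor `R_dᵀ` undoes, so the body wrench is left-invariant. Equivariance of the spatial wrench
then follows from `(g_l g)⁻¹ = g⁻¹ g_l⁻¹` and from `Ad` being multiplicative; the latter rests on
`(R v)^ = R v̂ Rᵀ`, which needs `det R = 1` (for `det R = -1` a sign appears). -/

open Matrix

/-- An element of `SE(3)` as a pair `(R, p)` of a `3×3` matrix and a vector. -/
abbrev SE3 := Matrix (Fin 3) (Fin 3) ℝ × (Fin 3 → ℝ)

/-- Group product on `SE(3)`: `(R₁,p₁)·(R₂,p₂) = (R₁R₂, R₁p₂ + p₁)`. -/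
def se3Mul (a b : SE3) : SE3 := (a.1 * b.1, a.1.mulVec b.2 + a.2)

/-- Inverse on `SE(3)`: `(R,p)⁻¹ = (Rᵀ, −Rᵀp)`. -/
def se3Inv (a : SE3) : SE3 := (a.1ᵀ, -(a.1ᵀ.mulVec a.2))

/-- The hat map `ω ↦ ω̂` sending `ω ∈ ℝ³` to the skew-symmetric matrix with
`ω̂ v = ω × v`. -/
def hat (ω : Fin 3 → ℝ) : Matrix (Fin 3) (Fin 3) ℝ :=
  !![0, -ω 2, ω 1; ω 2, 0, -ω 0; -ω 1, ω 0, 0]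

/-- The vee map, sending a (skew-symmetric) `3×3` matrix `A` to the vector
`ω` with `ω̂ = A`. -/
def vee (A : Matrix (Fin 3) (Fin 3) ℝ) : Fin 3 → ℝ :=
  ![A 2 1, A 0 2, A 1 0]

/-- The `6×6` Adjoint matrix `Ad_g = [[R, p̂R],[0,R]]` of `g = (R,p) ∈ SE(3)`. -/
def Adj (a : SE3) : Matrix (Fin 3 ⊕ Fin 3) (Fin 3 ⊕ Fin 3) ℝ :=
  Matrix.fromBlocks a.1 (hat a.2 * a.1) 0 a.1

/-- The body-frame elastic geometric wrench
`f_G(g,g_d) = (RᵀR_d K_p R_dᵀ(p − p_d), (K_R R_dᵀR − RᵀR_d K_R)^∨) ∈ ℝ⁶`. -/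
def fG (Kp KR : Matrix (Fin 3) (Fin 3) ℝ) (g gd : SE3) : (Fin 3 ⊕ Fin 3) → ℝ :=
  Sum.elim ((g.1ᵀ * gd.1 * Kp * gd.1ᵀ).mulVec (g.2 - gd.2))
    (vee (KR * gd.1ᵀ * g.1 - g.1ᵀ * gd.1 * KR))

/-- The spatial-frame elastic wrench `f_G^s(g,g_d) = Ad_{g⁻¹}ᵀ f_G(g,g_d)`. -/
def fGs (Kp KR : Matrix (Fin 3) (Fin 3) ℝ) (g gd : SE3) : (Fin 3 ⊕ Fin 3) → ℝ :=
  (Adj (se3Inv g))ᵀ.mulVec (fG Kp KR g gd)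

lemma transpose_mul_mul_cancel {n α : Type*} [Fintype n] [DecidableEq n] [CommSemiring α]
    {A : Matrix n n α} (hA : Aᵀ * A = 1) (B C : Matrix n n α) :
    (A * B)ᵀ * (A * C) = Bᵀ * C := by
  rw [transpose_mul, Matrix.mul_assoc, ← Matrix.mul_assoc Aᵀ, hA, Matrix.one_mul]

lemma transpose_mul_hat_mulVec_mul (A : Matrix (Fin 3) (Fin 3) ℝ) (v : Fin 3 → ℝ) :
    Aᵀ * hat (A *ᵥ v) * A = A.det • hat v := by
  ext i j
  fin_cases i <;> fin_cases j <;>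
    simp [hat, mul_apply, mulVec, dotProduct, Fin.sum_univ_three, det_fin_three] <;> ring

lemma hat_mulVec {R : Matrix (Fin 3) (Fin 3) ℝ} (hR : Rᵀ * R = 1) (hRdet : R.det = 1)
    (v : Fin 3 → ℝ) : hat (R *ᵥ v) = R * hat v * Rᵀ := by
  have hR' : R * Rᵀ = 1 := mul_eq_one_comm.mp hR
  calc hat (R *ᵥ v) = (R * Rᵀ) * hat (R *ᵥ v) * (R * Rᵀ) := by simp [hR']
    _ = R * (Rᵀ * hat (R *ᵥ v) * R) * Rᵀ := by noncomm_ring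
    _ = R * hat v * Rᵀ := by rw [transpose_mul_hat_mulVec_mul, hRdet, one_smul]

lemma hat_add (v w : Fin 3 → ℝ) : hat (v + w) = hat v + hat w := by
  ext i j
  fin_cases i <;> fin_cases j <;> simp [hat] <;> ring

lemma se3Inv_se3Mul {a : SE3} (ha : a.1ᵀ * a.1 = 1) (b : SE3) :
    se3Inv (se3Mul a b) = se3Mul (se3Inv b) (se3Inv a) := by
  have hcancel : a.1ᵀ *ᵥ (a.1 *ᵥ b.2) = b.2 := by rw [mulVec_mulVec, ha, one_mulVec]
  ext1
  · simp [se3Inv, se3Mul, transpose_mul]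
  · simp only [se3Inv, se3Mul, transpose_mul, ← mulVec_mulVec, mulVec_add, mulVec_neg, hcancel]
    abel

lemma Adj_se3Mul {a : SE3} (ha : a.1ᵀ * a.1 = 1) (hadet : a.1.det = 1) (b : SE3) :
    Adj (se3Mul a b) = Adj a * Adj b := by
  have hconj : a.1 * hat b.2 * a.1ᵀ * (a.1 * b.1) = a.1 * (hat b.2 * b.1) := by
    calc a.1 * hat b.2 * a.1ᵀ * (a.1 * b.1) = a.1 * hat b.2 * (a.1ᵀ * a.1) * b.1 := by
          noncomm_ring
      _ = a.1 * (hat b.2 * b.1) := by rw [ha]; noncomm_ring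
  simp only [Adj, se3Mul, fromBlocks_multiply, Matrix.zero_mul, Matrix.mul_zero, add_zero,
    zero_add, hat_add, hat_mulVec ha hadet, Matrix.add_mul, hconj]
  congr 1
  noncomm_ring

lemma fG_se3Mul_se3Mul {a : SE3} (ha : a.1ᵀ * a.1 = 1) (Kp KR : Matrix (Fin 3) (Fin 3) ℝ)
    (g gd : SE3) : fG Kp KR (se3Mul a g) (se3Mul a gd) = fG Kp KR g gd := by
  have hdiff : (a.1 *ᵥ g.2 + a.2) - (a.1 *ᵥ gd.2 + a.2) = a.1 *ᵥ (g.2 - gd.2) := by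
    rw [mulVec_sub]; abel
  have hback : (a.1 * gd.1)ᵀ * a.1 = gd.1ᵀ := by
    simpa using transpose_mul_mul_cancel ha gd.1 1
  rw [fG, fG, se3Mul, se3Mul, hdiff, mulVec_mulVec, transpose_mul_mul_cancel ha,
    Matrix.mul_assoc _ _ a.1, hback, Matrix.mul_assoc KR, transpose_mul_mul_cancel ha,
    ← Matrix.mul_assoc]

theorem fGs_se3Mul_se3Mul {a g : SE3} (ha : a.1ᵀ * a.1 = 1) (hg : g.1ᵀ * g.1 = 1)
    (hgdet : g.1.det = 1) (Kp KR : Matrix (Fin 3) (Fin 3) ℝ) (gd : SE3) :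
    fGs Kp KR (se3Mul a g) (se3Mul a gd) = (Adj (se3Inv a))ᵀ *ᵥ fGs Kp KR g gd := by
  have hginv : (se3Inv g).1ᵀ * (se3Inv g).1 = 1 := by
    simpa [se3Inv] using mul_eq_one_comm.mp hg
  have hginvdet : (se3Inv g).1.det = 1 := by simpa [se3Inv] using hgdet
  rw [fGs, fGs, fG_se3Mul_se3Mul ha, se3Inv_se3Mul ha, Adj_se3Mul hginv hginvdet,
    transpose_mul, mulVec_mulVec]

theorem spatial_wrench_equivariant_general
    (R Rd Rl Kp KR : Matrix (Fin 3) (Fin 3) ℝ) (p pd pl : Fin 3 → ℝ)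
    (hR : Rᵀ * R = 1) (hRdet : R.det = 1)
    (hRl : Rlᵀ * Rl = 1) :
    fGs Kp KR (se3Mul (Rl, pl) (R, p)) (se3Mul (Rl, pl) (Rd, pd)) =
      (Adj (se3Inv (Rl, pl)))ᵀ.mulVec (fGs Kp KR (R, p) (Rd, pd)) :=
  fGs_se3Mul_se3Mul (a := (Rl, pl)) (g := (R, p)) hRl hR hRdet Kp KR (Rd, pd)

/-- Proposition 2 (wrench equivariance): the spatial-frame elastic wrench is
`SE(3)`-equivariant, `f_G^s(g_l g, g_l g_d) = Ad_{g_l⁻¹}ᵀ f_G^s(g, g_d)`. -/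
theorem spatial_wrench_equivariant
    (R Rd Rl Kp KR : Matrix (Fin 3) (Fin 3) ℝ) (p pd pl : Fin 3 → ℝ)
    (hR : Rᵀ * R = 1) (hRdet : R.det = 1)
    (hRd : Rdᵀ * Rd = 1) (hRddet : Rd.det = 1)
    (hRl : Rlᵀ * Rl = 1) (hRldet : Rl.det = 1) :
    fGs Kp KR (se3Mul (Rl, pl) (R, p)) (se3Mul (Rl, pl) (Rd, pd)) =
      (Adj (se3Inv (Rl, pl)))ᵀ.mulVec (fGs Kp KR (R, p) (Rd, pd)) :=
  spatial_wrench_equivariant_general R Rd Rl Kp KR p pd pl hR hRdet hRl
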